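/- (SLLN for the DTHP) Under the assumptions Σ_{i=0}^∞ β_i < 1, √n Σ_{i=n}^∞ β_i → 0 as n → ∞, (1/√n) Σ_{i=1}^n i β_i → 0 as n → ∞, and Σ_{i=1}^∞ i β_i < ∞, one has H_n / n → β_0 / (1 − Σ_{i=1}^∞ β_i) as n → ∞ almost surely. -/

import Mathlib

/-! The innovations `ξₙ - λₙ`, where `λₙ = β₀ + ∑_{i<n} β_{n-i} ξᵢ` is the conditional intensity,
are bounded by `1` and orthogonal in `L²`, so their partial sums `Mₙ` satisfy `E[Mₙ²] ≤ n`. Along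
the squares this gives `∑ₖ E[(M_{k²}/k²)²] < ∞`, hence `M_{k²}/k² → 0` a.s., and since `Mₙ + n` is
monotone the convergence extends to `Mₙ/n → 0`. Exchanging the order of summation,
`(1 - S) Hₙ = Mₙ + n β₀ - ∑_{i≤n} r_{n-i} ξᵢ` with `S = ∑_{i≥1} βᵢ` and `r_m = ∑_{i>m} βᵢ`; the
last sum is at most `∑_{m<n} r_m = o(n)` because `r_m → 0`. -/

open MeasureTheory Filter Finset Topology

theorem sum_Icc_one_eq_sum_range {M : Type*} [AddCommMonoid M] (f : ℕ → M) (n : ℕ) :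
    ∑ i ∈ Icc 1 n, f i = ∑ i ∈ range n, f (i + 1) := by
  rw [range_eq_Ico, sum_Ico_add', zero_add, Ico_add_one_right_eq_Icc]

theorem sum_Icc_one_sub_eq_sum_range {M : Type*} [AddCommMonoid M] (f : ℕ → M) (n : ℕ) :
    ∑ i ∈ Icc 1 n, f (n - i) = ∑ m ∈ range n, f m :=
  sum_nbij' (n - ·) (n - ·) (by simp only [mem_Icc, mem_range]; omega)
    (by simp only [mem_Icc, mem_range]; omega) (by simp only [mem_Icc]; omega)
    (by simp only [mem_range]; omega) fun _ _ => rfl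

theorem tendsto_div_of_tendsto_div_sq {M : ℕ → ℝ} (hM : Monotone fun n => M n + n)
    (h : Tendsto (fun k : ℕ => M (k ^ 2) / (k : ℝ) ^ 2) atTop (𝓝 0)) :
    Tendsto (fun n : ℕ => M n / n) atTop (𝓝 0) := by
  have hsq (a : ℝ) (ha : 1 < a) : ∀ᶠ k : ℕ in atTop, (((k + 1) ^ 2 : ℕ) : ℝ) ≤ a * (k ^ 2 : ℕ) := by
    have hlim : Tendsto (fun k : ℕ => (1 + 1 / (k : ℝ)) ^ 2) atTop (𝓝 1) := by
      simpa using (tendsto_one_div_atTop_nhds_zero_nat.const_add (1 : ℝ)).pow 2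
    filter_upwards [hlim.eventually (eventually_le_nhds ha), eventually_ne_atTop 0] with k hk hk0
    have hk0' : (k : ℝ) ≠ 0 := by exact_mod_cast hk0
    calc (((k + 1) ^ 2 : ℕ) : ℝ) = (1 + 1 / (k : ℝ)) ^ 2 * (k : ℝ) ^ 2 := by
          push_cast; field_simp
      _ ≤ a * (k ^ 2 : ℕ) := by push_cast; gcongr
  have hu := tendsto_div_of_monotone_of_exists_subseq_tendsto_div (fun n => M n + n) 1 hM
    fun a ha => ⟨(· ^ 2), hsq a ha, tendsto_pow_atTop two_ne_zero, by
      refine (zero_add (1 : ℝ) ▸ h.add_const 1).congr' ((eventually_ne_atTop 0).mono fun k hk => ?_)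
      have hk' : (k : ℝ) ≠ 0 := by exact_mod_cast hk
      push_cast
      field_simp⟩
  simpa using (hu.sub_const 1).congr' ((eventually_ne_atTop 0).mono fun n hn => by
    have hn' : (n : ℝ) ≠ 0 := by exact_mod_cast hn
    field_simp
    ring)

theorem ae_tendsto_zero_of_summable_integral_sq {Ω : Type*} {mΩ : MeasurableSpace Ω}
    {μ : Measure Ω} {Y : ℕ → Ω → ℝ} (hY : ∀ k, Measurable (Y k))
    (hint : ∀ k, Integrable (fun ω => Y k ω ^ 2) μ)
    (hs : Summable fun k => ∫ ω, Y k ω ^ 2 ∂μ) :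
    ∀ᵐ ω ∂μ, Tendsto (fun k => Y k ω) atTop (𝓝 0) := by
  have hnorm (k : ℕ) : eLpNorm (fun ω => Y k ω ^ 2) 1 μ = ENNReal.ofReal (∫ ω, Y k ω ^ 2 ∂μ) := by
    rw [eLpNorm_one_eq_lintegral_enorm, ofReal_integral_eq_lintegral_ofReal (hint k)
      (ae_of_all _ fun ω => sq_nonneg _)]
    simp_rw [Real.enorm_of_nonneg (sq_nonneg _)]
  have hfin : ∑' k, eLpNorm (fun ω => Y k ω ^ 2) 1 μ ≠ ⊤ := by
    simp_rw [hnorm, ← ENNReal.ofReal_tsum_of_nonneg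
      (fun k => integral_nonneg fun ω => sq_nonneg _) hs]
    exact ENNReal.ofReal_ne_top
  filter_upwards [summable_norm_of_tsum_eLpNorm_ne_top le_rfl
    (fun k => ((hY k).pow_const 2).aestronglyMeasurable) hfin] with ω hω
  have := hω.tendsto_atTop_zero.sqrt
  simp_rw [Real.norm_eq_abs, abs_pow, sq_abs, Real.sqrt_sq_eq_abs, Real.sqrt_zero] at this
  exact tendsto_zero_iff_abs_tendsto_zero _ |>.2 this

section Orthogonal

variable {Ω : Type*} {mΩ : MeasurableSpace Ω} {P : Measure Ω} [IsProbabilityMeasure P]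
  {X : ℕ → Ω → ℝ}

theorem integrable_sq_sum (hX : ∀ i, Measurable (X i)) (hb : ∀ i ω, |X i ω| ≤ 1)
    (s : Finset ℕ) : Integrable (fun ω => (∑ i ∈ s, X i ω) ^ 2) P := by
  refine .of_bound ((Finset.measurable_sum s fun i _ => hX i).pow_const 2).aestronglyMeasurable
    ((#s : ℝ) ^ 2) (ae_of_all _ fun ω => ?_)
  have hsum : |∑ i ∈ s, X i ω| ≤ #s :=
    (abs_sum_le_sum_abs _ _).trans (by simpa using sum_le_sum fun i (_ : i ∈ s) => hb i ω)
  simpa [abs_pow] using pow_le_pow_left₀ (abs_nonneg _) hsum 2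

theorem integral_sq_sum_le_card (hX : ∀ i, Measurable (X i)) (hb : ∀ i ω, |X i ω| ≤ 1)
    (horth : ∀ i j, i < j → ∫ ω, X i ω * X j ω ∂P = 0) (s : Finset ℕ) :
    ∫ ω, (∑ i ∈ s, X i ω) ^ 2 ∂P ≤ #s := by
  have hint (i j : ℕ) : Integrable (fun ω => X i ω * X j ω) P :=
    .of_bound ((hX i).mul (hX j)).aestronglyMeasurable 1 (ae_of_all _ fun ω => by
      simpa [abs_mul] using mul_le_one₀ (hb i ω) (abs_nonneg _) (hb j ω))
  have hoff (i j : ℕ) (hij : i ≠ j) : ∫ ω, X i ω * X j ω ∂P = 0 := by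
    rcases hij.lt_or_gt with h | h
    · exact horth i j h
    · simpa only [mul_comm] using horth j i h
  have hdiag (i : ℕ) : ∫ ω, X i ω * X i ω ∂P ≤ 1 := by
    simpa using integral_mono (hint i i) (integrable_const 1) fun ω =>
      (abs_le.1 (hb i ω)).elim fun h₁ h₂ => by nlinarith
  calc ∫ ω, (∑ i ∈ s, X i ω) ^ 2 ∂P
      = ∑ i ∈ s, ∑ j ∈ s, ∫ ω, X i ω * X j ω ∂P := by
        simp_rw [sq, sum_mul_sum]
        rw [integral_finsetSum _ fun i _ => integrable_finsetSum _ fun j _ => hint i j]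
        exact sum_congr rfl fun i _ => integral_finsetSum _ fun j _ => hint i j
    _ = ∑ i ∈ s, ∫ ω, X i ω * X i ω ∂P :=
        sum_congr rfl fun i hi => sum_eq_single_of_mem i hi fun j _ hji => hoff i j hji.symm
    _ ≤ #s := by simpa using sum_le_sum fun i (_ : i ∈ s) => hdiag i

theorem ae_tendsto_sum_range_div_of_orthogonal (hX : ∀ i, Measurable (X i))
    (hb : ∀ i ω, |X i ω| ≤ 1) (horth : ∀ i j, i < j → ∫ ω, X i ω * X j ω ∂P = 0) :
    ∀ᵐ ω ∂P, Tendsto (fun n : ℕ => (∑ i ∈ range n, X i ω) / n) atTop (𝓝 0) := by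
  have hbound (k : ℕ) : ∫ ω, ((∑ i ∈ range (k ^ 2), X i ω) / (k : ℝ) ^ 2) ^ 2 ∂P ≤
      1 / (k : ℝ) ^ 2 := by
    simp_rw [div_pow, integral_div]
    calc (∫ ω, (∑ i ∈ range (k ^ 2), X i ω) ^ 2 ∂P) / ((k : ℝ) ^ 2) ^ 2
        ≤ (k : ℝ) ^ 2 / ((k : ℝ) ^ 2) ^ 2 := by
          gcongr
          exact (integral_sq_sum_le_card hX hb horth _).trans_eq (by simp)
      _ = 1 / (k : ℝ) ^ 2 := by
          rcases eq_or_ne k 0 with rfl | hk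
          · simp
          · field_simp
  have hsq := ae_tendsto_zero_of_summable_integral_sq
    (fun k => (Finset.measurable_sum _ fun i _ => hX i).div_const _)
    (fun k => by
      simpa only [div_pow] using
        (integrable_sq_sum hX hb (range (k ^ 2))).div_const (((k : ℝ) ^ 2) ^ 2))
    (Summable.of_nonneg_of_le (fun k => integral_nonneg fun ω => sq_nonneg _) hbound
      (Real.summable_one_div_nat_pow.2 one_lt_two))
  filter_upwards [hsq] with ω hω
  refine tendsto_div_of_tendsto_div_sq (monotone_nat_of_le_succ fun n => ?_) hω
  simp only [sum_range_succ, Nat.cast_succ]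
  linarith [(abs_le.1 (hb n ω)).1]

end Orthogonal

theorem integral_mul_eq_zero_of_condExp_eq_zero {Ω : Type*} {m m₀ : MeasurableSpace Ω}
    {μ : Measure Ω} [IsFiniteMeasure μ] (hm : m ≤ m₀) {f g : Ω → ℝ}
    (hf : StronglyMeasurable[m] f) (hfg : Integrable (f * g) μ) (hg : Integrable g μ)
    (hcond : μ[g|m] =ᵐ[μ] 0) : ∫ ω, f ω * g ω ∂μ = 0 := by
  calc ∫ ω, f ω * g ω ∂μ = ∫ ω, (μ[f * g|m]) ω ∂μ := (integral_condExp hm).symm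
    _ = 0 := by
      rw [← integral_zero Ω ℝ]
      refine integral_congr_ae ?_
      filter_upwards [condExp_mul_of_stronglyMeasurable_left hf hfg hg, hcond] with ω h₁ h₂
      simp [h₁, h₂]

def hawkesIntensity (β x : ℕ → ℝ) (n : ℕ) : ℝ :=
  β 0 + ∑ i ∈ Icc 1 (n - 1), β (n - i) * x i

section Intensity

variable {β x : ℕ → ℝ}

theorem sum_Icc_sub_le_tsum (hβ : ∀ i, 0 ≤ β i) (hβs : Summable β) (n : ℕ) :
    ∑ i ∈ Icc 1 (n - 1), β (n - i) ≤ ∑' k, β (k + 1) := by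
  calc ∑ i ∈ Icc 1 (n - 1), β (n - i) = ∑ i ∈ Icc 1 (n - 1), β (n - 1 - i + 1) :=
        sum_congr rfl fun i hi => by rw [mem_Icc] at hi; congr 1; omega
    _ = ∑ k ∈ range (n - 1), β (k + 1) := sum_Icc_one_sub_eq_sum_range (β ·.succ) _
    _ ≤ ∑' k, β (k + 1) :=
        ((summable_nat_add_iff 1).2 hβs).sum_le_tsum _ fun k _ => hβ _

theorem hawkesIntensity_nonneg (hβ : ∀ i, 0 ≤ β i) (hx : ∀ i, 0 ≤ x i) (n : ℕ) :
    0 ≤ hawkesIntensity β x n :=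
  add_nonneg (hβ 0) (sum_nonneg fun i _ => mul_nonneg (hβ _) (hx i))

theorem hawkesIntensity_le_tsum (hβ : ∀ i, 0 ≤ β i) (hβs : Summable β)
    (hx1 : ∀ i, x i ≤ 1) (n : ℕ) : hawkesIntensity β x n ≤ ∑' i, β i := by
  rw [hβs.tsum_eq_zero_add]
  refine add_le_add_right ((sum_le_sum fun i _ => ?_).trans (sum_Icc_sub_le_tsum hβ hβs n)) _
  exact mul_le_of_le_one_right (hβ _) (hx1 i)

theorem sum_hawkesIntensity (hβs : Summable β) (n : ℕ) :
    ∑ i ∈ Icc 1 n, hawkesIntensity β x i = n * β 0 +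
      ∑ i ∈ Icc 1 n, (∑' k, β (k + 1) - ∑' k, β (k + (n - i) + 1)) * x i := by
  have hcomm : ∑ j ∈ Icc 1 n, ∑ i ∈ Icc 1 (j - 1), β (j - i) * x i =
      ∑ i ∈ Icc 1 n, ∑ j ∈ Ioc i n, β (j - i) * x i :=
    sum_comm' fun j i => by simp only [mem_Icc, mem_Ioc]; omega
  have hinner (i : ℕ) : ∑ j ∈ Ioc i n, β (j - i) = ∑ k ∈ range (n - i), β (k + 1) :=
    sum_nbij' (· - i - 1) (· + i + 1) (by simp only [mem_Ioc, mem_range]; omega)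
      (by simp only [mem_Ioc, mem_range]; omega) (by simp only [mem_Ioc]; omega)
      (by simp only [mem_range]; omega) fun j hj => by rw [mem_Ioc] at hj; congr 1; omega
  have htail (m : ℕ) : ∑ k ∈ range m, β (k + 1) = ∑' k, β (k + 1) - ∑' k, β (k + m + 1) := by
    rw [eq_sub_iff_add_eq, ← ((summable_nat_add_iff 1).2 hβs).sum_add_tsum_nat_add m]
  simp only [hawkesIntensity, sum_add_distrib, sum_const, Nat.card_Icc, hcomm, ← sum_mul,
    hinner, htail]
  simp

theorem tendsto_sum_div_of_tendsto_sum_sub_hawkesIntensity (hβ : ∀ i, 0 ≤ β i)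
    (hβs : Summable β) (hS : ∑' i, β (i + 1) < 1) (hx0 : ∀ i, 0 ≤ x i) (hx1 : ∀ i, x i ≤ 1)
    (h : Tendsto (fun n : ℕ => (∑ i ∈ Icc 1 n, (x i - hawkesIntensity β x i)) / n) atTop
      (𝓝 0)) :
    Tendsto (fun n : ℕ => (∑ i ∈ Icc 1 n, x i) / n) atTop
      (𝓝 (β 0 / (1 - ∑' i, β (i + 1)))) := by
  set r : ℕ → ℝ := fun m => ∑' k, β (k + m + 1)
  have hr0 (m : ℕ) : 0 ≤ r m := tsum_nonneg fun _ => hβ _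
  have hsplit (n : ℕ) : (1 - ∑' i, β (i + 1)) * ∑ i ∈ Icc 1 n, x i =
      ∑ i ∈ Icc 1 n, (x i - hawkesIntensity β x i) + n * β 0 - ∑ i ∈ Icc 1 n, r (n - i) * x i := by
    simp only [sum_sub_distrib, sum_hawkesIntensity hβs, sub_mul, ← mul_sum, r]
    ring
  have hrem : Tendsto (fun n : ℕ => (∑ i ∈ Icc 1 n, r (n - i) * x i) / n) atTop (𝓝 0) := by
    refine squeeze_zero (fun n => div_nonneg (sum_nonneg fun i _ => mul_nonneg (hr0 _) (hx0 i))
      n.cast_nonneg) (fun n => ?_) (tendsto_sum_nat_add fun k => β (k + 1)).cesaro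
    rw [div_eq_inv_mul, ← sum_Icc_one_sub_eq_sum_range r]
    gcongr with i
    exact mul_le_of_le_one_right (hr0 _) (hx1 i)
  have hlim := ((h.add_const (β 0)).sub hrem).div_const (1 - ∑' i, β (i + 1))
  rw [zero_add, sub_zero] at hlim
  refine hlim.congr' ((eventually_ne_atTop 0).mono fun n hn => ?_)
  have hS' : 1 - ∑' i, β (i + 1) ≠ 0 := by linarith
  field_simp
  linarith [hsplit n]

end Intensity

section Hawkes

variable {Ω : Type*} {mΩ : MeasurableSpace Ω} {β : ℕ → ℝ} {ξ : ℕ → Ω → ℝ}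
  {F : ℕ → MeasurableSpace Ω}

theorem measurable_hawkesIntensity {m : MeasurableSpace Ω} {n : ℕ}
    (hξ : ∀ i ∈ Icc 1 (n - 1), Measurable[m] (ξ i)) :
    Measurable[m] fun ω => hawkesIntensity β (ξ · ω) n :=
  measurable_const.add (Finset.measurable_sum _ fun i hi => (hξ i hi).const_mul _)

theorem measurable_natural_of_mem_Icc
    (hF : ∀ n, F n = ⨆ i ∈ Icc 1 n, MeasurableSpace.comap (ξ i) inferInstance) {i n : ℕ}
    (hi : i ∈ Icc 1 n) : Measurable[F n] (ξ i) := by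
  rw [measurable_iff_comap_le, hF n]
  exact le_iSup₂ (f := fun i _ => MeasurableSpace.comap (ξ i) inferInstance) i hi

theorem natural_le_of_measurable (hξ : ∀ n, Measurable (ξ n))
    (hF : ∀ n, F n = ⨆ i ∈ Icc 1 n, MeasurableSpace.comap (ξ i) inferInstance) (n : ℕ) :
    F n ≤ mΩ := by
  rw [hF n]
  exact iSup₂_le fun i _ => (hξ i).comap_le

theorem condExp_sub_hawkesIntensity_eq_zero {P : Measure Ω} [IsFiniteMeasure P]
    (hξ : ∀ n, Measurable (ξ n))
    (hF : ∀ n, F n = ⨆ i ∈ Icc 1 n, MeasurableSpace.comap (ξ i) inferInstance)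
    {n : ℕ} (hcond : P[ξ n|F (n - 1)] =ᵐ[P] fun ω => hawkesIntensity β (ξ · ω) n)
    (hξint : Integrable (ξ n) P)
    (hintensity : Integrable (fun ω => hawkesIntensity β (ξ · ω) n) P) :
    P[fun ω => ξ n ω - hawkesIntensity β (ξ · ω) n|F (n - 1)] =ᵐ[P] 0 := by
  have hfix : P[fun ω => hawkesIntensity β (ξ · ω) n|F (n - 1)] =
      fun ω => hawkesIntensity β (ξ · ω) n :=
    condExp_of_stronglyMeasurable (natural_le_of_measurable hξ hF _)
      (measurable_hawkesIntensity fun i hi =>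
        measurable_natural_of_mem_Icc hF hi).stronglyMeasurable hintensity
  filter_upwards [condExp_sub hξint hintensity (F (n - 1)), hcond] with ω h₁ h₂
  refine h₁.trans ?_
  simp [hfix, h₂]

theorem integral_sub_hawkesIntensity_mul_eq_zero {P : Measure Ω} [IsFiniteMeasure P]
    (hξ : ∀ n, Measurable (ξ n))
    (hF : ∀ n, F n = ⨆ i ∈ Icc 1 n, MeasurableSpace.comap (ξ i) inferInstance)
    (hcond : ∀ n, 2 ≤ n → P[ξ n|F (n - 1)] =ᵐ[P] fun ω => hawkesIntensity β (ξ · ω) n)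
    (hξ_le : ∀ n ω, |ξ n ω| ≤ 1) (hintensity_le : ∀ n ω, |hawkesIntensity β (ξ · ω) n| ≤ 1)
    {i j : ℕ} (hi : 1 ≤ i) (hij : i < j) :
    ∫ ω, (ξ i ω - hawkesIntensity β (ξ · ω) i) * (ξ j ω - hawkesIntensity β (ξ · ω) j) ∂P
      = 0 := by
  have hξint (n : ℕ) : Integrable (ξ n) P :=
    .of_bound (hξ n).aestronglyMeasurable 1 (ae_of_all _ (hξ_le n))
  have hint (n : ℕ) : Integrable (fun ω => hawkesIntensity β (ξ · ω) n) P :=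
    .of_bound (measurable_hawkesIntensity fun k _ => hξ k).aestronglyMeasurable 1
      (ae_of_all _ (hintensity_le n))
  have hi_meas : Measurable[F (j - 1)] fun ω => ξ i ω - hawkesIntensity β (ξ · ω) i :=
    (measurable_natural_of_mem_Icc hF (mem_Icc.2 ⟨hi, by omega⟩)).sub
      (measurable_hawkesIntensity fun k hk =>
        measurable_natural_of_mem_Icc hF (by rw [mem_Icc] at hk ⊢; omega))
  refine integral_mul_eq_zero_of_condExp_eq_zero (natural_le_of_measurable hξ hF (j - 1))
    hi_meas.stronglyMeasurable ?_ ((hξint j).sub (hint j))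
    (condExp_sub_hawkesIntensity_eq_zero hξ hF (hcond j (by omega)) (hξint j) (hint j))
  exact ((hξint j).sub (hint j)).bdd_mul (c := 2)
    (hi_meas.mono (natural_le_of_measurable hξ hF _) le_rfl).aestronglyMeasurable
    (ae_of_all _ fun ω => (abs_sub _ _).trans (by linarith [hξ_le i ω, hintensity_le i ω]))

end Hawkes

theorem stmt8_general
    {Ω : Type*} [MeasurableSpace Ω] (P : Measure Ω) [IsProbabilityMeasure P]
    (β : ℕ → ℝ) (hβpos : ∀ i, 0 < β i)
    (hβsummable : Summable β)
    (hβsum : ∑' i, β i < 1)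
    (ξ : ℕ → Ω → ℝ) (hξmeas : ∀ n, Measurable (ξ n))
    (hξ01 : ∀ n ω, ξ n ω = 0 ∨ ξ n ω = 1)
    (F : ℕ → MeasurableSpace Ω)
    (hF : ∀ n, F n = ⨆ i ∈ Finset.Icc 1 n, MeasurableSpace.comap (ξ i) inferInstance)
    (hcond : ∀ n, 2 ≤ n →
      P[ξ n|F (n - 1)] =ᵐ[P] fun ω => β 0 + ∑ i ∈ Finset.Icc 1 (n - 1), β (n - i) * ξ i ω)
    (H : ℕ → Ω → ℝ) (hH : ∀ n ω, H n ω = ∑ i ∈ Finset.Icc 1 n, ξ i ω) :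
    ∀ᵐ ω ∂P, Tendsto (fun n => H n ω / (n : ℝ)) atTop
      (nhds (β 0 / (1 - ∑' i, β (i + 1)))) := by
  have hβ (i : ℕ) : 0 ≤ β i := (hβpos i).le
  have hξ_nonneg (n : ℕ) (ω : Ω) : 0 ≤ ξ n ω := by rcases hξ01 n ω with h | h <;> simp [h]
  have hξ_le (n : ℕ) (ω : Ω) : ξ n ω ≤ 1 := by rcases hξ01 n ω with h | h <;> simp [h]
  have hintensity_nonneg (n : ℕ) (ω : Ω) : 0 ≤ hawkesIntensity β (ξ · ω) n :=
    hawkesIntensity_nonneg hβ (hξ_nonneg · ω) n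
  have hintensity_le (n : ℕ) (ω : Ω) : hawkesIntensity β (ξ · ω) n ≤ 1 :=
    (hawkesIntensity_le_tsum hβ hβsummable (hξ_le · ω) n).trans hβsum.le
  have hS : ∑' i, β (i + 1) < 1 := by
    rw [hβsummable.tsum_eq_zero_add] at hβsum
    linarith [hβpos 0]
  have hslln := ae_tendsto_sum_range_div_of_orthogonal (P := P)
    (X := fun i ω => ξ (i + 1) ω - hawkesIntensity β (ξ · ω) (i + 1))
    (fun i => (hξmeas _).sub (measurable_hawkesIntensity fun k _ => hξmeas k))
    (fun i ω => abs_sub_le_of_nonneg_of_le (hξ_nonneg _ ω) (hξ_le _ ω) (hintensity_nonneg _ ω)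
      (hintensity_le _ ω))
    fun i j hij => integral_sub_hawkesIntensity_mul_eq_zero hξmeas hF hcond
      (fun n ω => abs_le.2 ⟨by linarith [hξ_nonneg n ω], hξ_le n ω⟩)
      (fun n ω => (abs_of_nonneg (hintensity_nonneg n ω)).trans_le (hintensity_le n ω))
      (by omega) (by omega)
  filter_upwards [hslln] with ω hω
  simp_rw [hH]
  exact tendsto_sum_div_of_tendsto_sum_sub_hawkesIntensity hβ hβsummable hS (hξ_nonneg · ω)
    (hξ_le · ω) (by simpa only [sum_Icc_one_eq_sum_range] using hω)

theorem stmt8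
    {Ω : Type*} [MeasurableSpace Ω] (P : Measure Ω) [IsProbabilityMeasure P]
    (β : ℕ → ℝ) (hβpos : ∀ i, 0 < β i)
    (hβsummable : Summable β)
    (hβsum : ∑' i, β i < 1)
    (htail : Tendsto (fun n : ℕ => Real.sqrt n * ∑' i, β (n + i)) atTop (nhds 0))
    (hscaled : Tendsto (fun n : ℕ => (∑ i ∈ Finset.Icc 1 n, (i : ℝ) * β i) / Real.sqrt n)
      atTop (nhds 0))
    (hmoment : Summable fun i : ℕ => (i : ℝ) * β i)
    (ξ : ℕ → Ω → ℝ) (hξmeas : ∀ n, Measurable (ξ n))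
    (hξ01 : ∀ n ω, ξ n ω = 0 ∨ ξ n ω = 1)
    (F : ℕ → MeasurableSpace Ω)
    (hF : ∀ n, F n = ⨆ i ∈ Finset.Icc 1 n, MeasurableSpace.comap (ξ i) inferInstance)
    (hξ1 : P {ω | ξ 1 ω = 1} = ENNReal.ofReal (β 0))
    (hcond : ∀ n, 2 ≤ n →
      P[ξ n|F (n - 1)] =ᵐ[P] fun ω => β 0 + ∑ i ∈ Finset.Icc 1 (n - 1), β (n - i) * ξ i ω)
    (H : ℕ → Ω → ℝ) (hH : ∀ n ω, H n ω = ∑ i ∈ Finset.Icc 1 n, ξ i ω) :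
    ∀ᵐ ω ∂P, Tendsto (fun n => H n ω / (n : ℝ)) atTop
      (nhds (β 0 / (1 - ∑' i, β (i + 1)))) :=
  stmt8_general P β hβpos hβsummable hβsum ξ hξmeas hξ01 F hF hcond H hH
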